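/- arXiv:1608.08413 — 8 statements merged into one kernel-verified Lean document; each statement's English description precedes it below -/
import Mathlib

section
/- With the stationary distribution α^Γ(j,τ) = ω_j / Σ_k (Γ_k+1)ω_k (where ω_j = p_j^s > 0), the total passive probability Σ_{j=1}^K Σ_{τ=1}^{Γ_j} α^Γ(j,τ) = Σ_j Γ_j ω_j / Σ_k (Γ_k+1)ω_k is monotone: if Γ ≤ Γ' componentwise, then Σ_j Γ_j ω_j / Σ_k (Γ_k+1)ω_k ≤ Σ_j Γ'_j ω_j / Σ_k (Γ'_k+1)ω_k. -/
/-- Monotonicity of the long-run passive-time fraction in the threshold: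
if `Γ ≤ Γ'` componentwise then
`Σ_j Γ_j ω_j / Σ_k (Γ_k+1)ω_k ≤ Σ_j Γ'_j ω_j / Σ_k (Γ'_k+1)ω_k`. -/
theorem stmt_3 (K : ℕ) (ω : Fin K → ℝ) (hω : ∀ j, 0 < ω j)
    (Γ Γ' : Fin K → ℕ) (hΓ : ∀ j, Γ j ≤ Γ' j) :
    (∑ j, (Γ j : ℝ) * ω j) / (∑ k, ((Γ k : ℝ) + 1) * ω k) ≤
      (∑ j, (Γ' j : ℝ) * ω j) / (∑ k, ((Γ' k : ℝ) + 1) * ω k) := by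
  rcases Nat.eq_zero_or_pos K with hK | hK
  · subst hK; simp
  set S : ℝ := ∑ k, ω k with hS
  set A : ℝ := ∑ j, (Γ j : ℝ) * ω j with hA
  set A' : ℝ := ∑ j, (Γ' j : ℝ) * ω j with hA'
  have hSpos : 0 < S := Finset.sum_pos (fun i _ => hω i) (by
    simpa using Finset.univ_nonempty_iff.2 (Fin.pos_iff_nonempty.mp hK))
  have hA0 : 0 ≤ A := Finset.sum_nonneg fun i _ =>
    mul_nonneg (Nat.cast_nonneg _) (hω i).le
  have hAA : A ≤ A' := Finset.sum_le_sum fun i _ =>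
    mul_le_mul_of_nonneg_right (by exact_mod_cast hΓ i) (hω i).le
  have hd : ∀ (Δ : Fin K → ℕ), (∑ k, ((Δ k : ℝ) + 1) * ω k) =
      (∑ j, (Δ j : ℝ) * ω j) + S := by
    intro Δ
    simp [add_mul, Finset.sum_add_distrib, hS]
  rw [hd Γ, hd Γ']
  rw [div_le_div_iff₀ (by linarith) (by linarith)]
  nlinarith
end

section
/- Define the value iteration V_0(j,τ) = 0 and V_{t+1}(j,τ) = max{ R(j,τ) + W + β V_t(j,τ+1) ; R¹ + β Σ_k p_k^s V_t(k,1) }, where R(j,·) is non-increasing in τ for each j, 0 ≤ β < 1, W is a real constant, and p^s is a probability vector. Then for every t, V_t(j,τ) is non-increasing in τ for each j. -/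
/-- Value-iteration monotonicity: with `V_0 ≡ 0` and
`V_{t+1}(j,τ) = max{ R(j,τ) + W + β V_t(j,τ+1) ; R¹ + β Σ_k p_k^s V_t(k,1) }`,
where `R(j,·)` is non-increasing, every iterate `V_t(j,·)` is non-increasing in `τ`. -/
theorem stmt_4 (K : ℕ) (R : Fin K → ℕ → ℝ) (R1 W β : ℝ)
    (hβ0 : 0 ≤ β) (hβ1 : β < 1)
    (ps : Fin K → ℝ) (hps : ∀ k, 0 ≤ ps k) (hpsum : ∑ k, ps k = 1)
    (hR : ∀ j τ, R j (τ + 1) ≤ R j τ)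
    (V : ℕ → Fin K → ℕ → ℝ)
    (hV0 : ∀ j τ, V 0 j τ = 0)
    (hVrec : ∀ t j τ, V (t + 1) j τ =
      max (R j τ + W + β * V t j (τ + 1)) (R1 + β * ∑ k, ps k * V t k 1)) :
    ∀ t j τ, V t j (τ + 1) ≤ V t j τ := by
  intro t
  induction t with
  | zero => intro j τ; simp [hV0]
  | succ t ih =>
    intro j τ
    rw [hVrec, hVrec]
    apply max_le_max
    · have h1 := hR j τ
      have h2 := mul_le_mul_of_nonneg_left (ih j (τ + 1)) hβ0
      linarith
    · exact le_refl _
end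

section
/- Under the value iteration V_0 ≡ 0, V_{t+1}(j,τ) = max{ R(j,τ) + W + β V_t(j,τ+1) ; R¹ + β Σ_k p_k^s V_t(k,1) } with R(j,·) non-increasing in τ, for each fixed t and j the set {τ : the active term R¹ + β Σ_k p_k^s V_t(k,1) achieves the maximum in V_{t+1}(j,τ)} is upward closed in τ; i.e., if the active action is optimal at (j,τ) then it is optimal at (j,τ+1). -/
/-!
By induction on `t`, every iterate `V t j` is non-increasing in `τ`: the passive branch
`R j τ + W + β * V t j (τ + 1)` inherits monotonicity from `R j` and `V t j`, while the active
branch does not depend on `τ`. Hence the passive value at `τ + 1` is at most the passive value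
at `τ`, and any active value dominating the latter dominates the former.
-/

section ValueIteration

variable {ι : Type*} (R : ι → ℕ → ℝ) (W β : ℝ) (A : ℕ → ℝ) (V : ℕ → ι → ℕ → ℝ)

theorem value_iterate_succ_le (hβ0 : 0 ≤ β) (hR : ∀ j τ, R j (τ + 1) ≤ R j τ)
    (hV0 : ∀ j τ, V 0 j τ = 0)
    (hVrec : ∀ t j τ, V (t + 1) j τ = max (R j τ + W + β * V t j (τ + 1)) (A t)) :
    ∀ t j τ, V t j (τ + 1) ≤ V t j τ := by
  intro t
  induction t with
  | zero => simp [hV0]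
  | succ t ih =>
    intro j τ
    rw [hVrec, hVrec]
    gcongr
    · exact hR j τ
    · exact ih j (τ + 1)

theorem passive_value_succ_le (hβ0 : 0 ≤ β) (hR : ∀ j τ, R j (τ + 1) ≤ R j τ)
    (hV : ∀ t j τ, V t j (τ + 1) ≤ V t j τ) (t : ℕ) (j : ι) (τ : ℕ) :
    R j (τ + 1) + W + β * V t j (τ + 2) ≤ R j τ + W + β * V t j (τ + 1) := by
  gcongr
  · exact hR j τ
  · exact hV t j (τ + 1)

end ValueIteration

theorem stmt_5_general (K : ℕ) (R : Fin K → ℕ → ℝ) (R1 W β : ℝ)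
    (hβ0 : 0 ≤ β)
    (ps : Fin K → ℝ)
    (hR : ∀ j τ, R j (τ + 1) ≤ R j τ)
    (V : ℕ → Fin K → ℕ → ℝ)
    (hV0 : ∀ j τ, V 0 j τ = 0)
    (hVrec : ∀ t j τ, V (t + 1) j τ =
      max (R j τ + W + β * V t j (τ + 1)) (R1 + β * ∑ k, ps k * V t k 1)) :
    ∀ t j τ,
      R j τ + W + β * V t j (τ + 1) ≤ R1 + β * ∑ k, ps k * V t k 1 →
      R j (τ + 1) + W + β * V t j (τ + 2) ≤ R1 + β * ∑ k, ps k * V t k 1 := by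
  have hV := value_iterate_succ_le R W β (fun t ↦ R1 + β * ∑ k, ps k * V t k 1) V hβ0 hR hV0 hVrec
  intro t j τ hactive
  exact (passive_value_succ_le R W β V hβ0 hR hV t j τ).trans hactive

/-- Threshold structure of the value iteration: if the active value
`R¹ + β Σ_k p_k^s V_t(k,1)` achieves the maximum in `V_{t+1}(j,τ)`
(i.e. it dominates the passive value at `(j,τ)`), then it also does at `(j,τ+1)`:
the set of `τ` where the active action is optimal is upward closed. -/
theorem stmt_5 (K : ℕ) (R : Fin K → ℕ → ℝ) (R1 W β : ℝ)
    (hβ0 : 0 ≤ β) (hβ1 : β < 1)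
    (ps : Fin K → ℝ) (hps : ∀ k, 0 ≤ ps k) (hpsum : ∑ k, ps k = 1)
    (hR : ∀ j τ, R j (τ + 1) ≤ R j τ)
    (V : ℕ → Fin K → ℕ → ℝ)
    (hV0 : ∀ j τ, V 0 j τ = 0)
    (hVrec : ∀ t j τ, V (t + 1) j τ =
      max (R j τ + W + β * V t j (τ + 1)) (R1 + β * ∑ k, ps k * V t k 1)) :
    ∀ t j τ,
      R j τ + W + β * V t j (τ + 1) ≤ R1 + β * ∑ k, ps k * V t k 1 →
      R j (τ + 1) + W + β * V t j (τ + 2) ≤ R1 + β * ∑ k, ps k * V t k 1 :=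
  stmt_5_general K R R1 W β hβ0 ps hR V hV0 hVrec
end

section
/- Let g^Γ(W) = E[R^Γ] + W·c(Γ) be affine in W for each threshold policy Γ, where c(Γ) = Σ_j Γ_j ω_j / Σ_k (Γ_k+1)ω_k with ω_j > 0. Suppose W_0 < W_1 < ... are breakpoints and Γ^{-1} ≤ Γ^0 ≤ Γ^1 ≤ ... threshold vectors such that for each i, g^{Γ^i}(W_i) = g^{Γ^{i-1}}(W_i) ≥ g^Γ(W_i) for all Γ. Then, since c(Γ) is strictly increasing along the chain Γ^{-1} < Γ^0 < ..., for every W with W_i < W < W_{i+1} and every threshold Γ, g^{Γ^i}(W) ≥ g^Γ(W); i.e., Γ^i is optimal on the interval (W_i, W_{i+1}). -/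
/-- The passive-time slope `c(Γ) = Σ_j Γ_j ω_j / Σ_k (Γ_k+1)ω_k` of a threshold policy. -/
noncomputable def passiveSlope (K : ℕ) (ω : Fin K → ℝ) (Γv : Fin K → ℕ) : ℝ :=
  (∑ j, (Γv j : ℝ) * ω j) / (∑ k, ((Γv k : ℝ) + 1) * ω k)

/-- Optimality of `Γ^i` on the whole interval `(W_i, W_{i+1})`: if `g^Γ(W) = A(Γ) + W c(Γ)`
is affine with slope `c(Γ)`, the breakpoints `W_0 < W_1 < ⋯` satisfy
`g^{Γ^i}(W_i) = g^{Γ^{i-1}}(W_i) ≥ g^Γ(W_i)` for all `Γ`, and `c` is strictly increasing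
along the chain `Γ^{-1} < Γ^0 < ⋯`, then for every `W ∈ (W_i, W_{i+1})` and every
threshold `Γ` we have `g^{Γ^i}(W) ≥ g^Γ(W)`.
(Here `Γseq i` denotes `Γ^{i-1}`, so `Γseq (i+1)` is `Γ^i`.) -/
theorem stmt_7 (K : ℕ) (ω : Fin K → ℝ) (hω : ∀ j, 0 < ω j)
    (A : (Fin K → ℕ) → ℝ) (g : (Fin K → ℕ) → ℝ → ℝ)
    (hg : ∀ Γv Wv, g Γv Wv = A Γv + Wv * passiveSlope K ω Γv)
    (Γseq : ℕ → Fin K → ℕ)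
    (hchain : ∀ i, Γseq i < Γseq (i + 1))
    (hcmono : ∀ i, passiveSlope K ω (Γseq i) < passiveSlope K ω (Γseq (i + 1)))
    (Wseq : ℕ → ℝ) (hW : StrictMono Wseq)
    (hopt : ∀ i, g (Γseq (i + 1)) (Wseq i) = g (Γseq i) (Wseq i) ∧
      ∀ Γv, g Γv (Wseq i) ≤ g (Γseq (i + 1)) (Wseq i)) :
    ∀ i Wv, Wseq i < Wv → Wv < Wseq (i + 1) →
      ∀ Γv, g Γv Wv ≤ g (Γseq (i + 1)) Wv := by
  intro i Wv h1 h2 Γv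
  have hA : g Γv (Wseq i) ≤ g (Γseq (i + 1)) (Wseq i) := (hopt i).2 Γv
  have hB : g Γv (Wseq (i + 1)) ≤ g (Γseq (i + 1)) (Wseq (i + 1)) := by
    have := (hopt (i + 1)).2 Γv
    rw [(hopt (i + 1)).1] at this
    exact this
  rw [hg] at hA hB ⊢
  rw [hg (Γseq (i+1))] at hA hB ⊢
  nlinarith [mul_le_mul_of_nonneg_left hA (by linarith : (0:ℝ) ≤ Wseq (i+1) - Wv),
    mul_le_mul_of_nonneg_left hB (by linarith : (0:ℝ) ≤ Wv - Wseq i),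
    sub_pos.mpr (lt_trans h1 h2)]
end

section
/- Suppose a sequence (W_i) is defined by W_i = inf over Γ > Γ^{i-1} of [A(Γ^{i-1}) − A(Γ)] / [c(Γ) − c(Γ^{i-1})], where c is strictly increasing along the chain Γ^{-1} < Γ^0 < Γ^1 < ... of largest minimizers, and each Γ^i attains the infimum. Then W_i < W_{i+1} for all i; i.e., the sequence of candidate Whittle indices is strictly increasing. -/
/-- Strict monotonicity of the candidate Whittle indices: if
`W_i = inf_{Γ > Γ^{i-1}} (A(Γ^{i-1}) − A(Γ))/(c(Γ) − c(Γ^{i-1}))`,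
the infimum is attained at `Γ^i`, `Γ^i` is the largest minimizer, and `c` is
strictly increasing (componentwise), then `W_i < W_{i+1}` for all `i`.
(Here `Γseq i` denotes `Γ^{i-1}` and `W i` denotes `W_i`.) -/
theorem stmt_9 (K : ℕ) (A c : (Fin K → ℕ) → ℝ)
    (hc : ∀ Γv Γv' : Fin K → ℕ, Γv < Γv' → c Γv < c Γv')
    (Γseq : ℕ → Fin K → ℕ)
    (hchain : ∀ i, Γseq i < Γseq (i + 1))
    (W : ℕ → ℝ)
    (hglb : ∀ i, IsGLB
      {x : ℝ | ∃ Γv : Fin K → ℕ, Γseq i < Γv ∧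
        x = (A (Γseq i) - A Γv) / (c Γv - c (Γseq i))} (W i))
    (hatt : ∀ i, W i = (A (Γseq i) - A (Γseq (i + 1))) /
      (c (Γseq (i + 1)) - c (Γseq i)))
    (hlargest : ∀ i (Γv : Fin K → ℕ), Γseq i < Γv →
      (A (Γseq i) - A Γv) / (c Γv - c (Γseq i)) = W i → Γv ≤ Γseq (i + 1)) :
    ∀ i, W i < W (i + 1) := by
  intro i
  by_contra h
  push_neg at h
  have h01 := hchain i
  have h12 := hchain (i + 1)
  have h02 : Γseq i < Γseq (i + 2) := lt_trans h01 h12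
  have d1 : (0:ℝ) < c (Γseq (i+1)) - c (Γseq i) := sub_pos.mpr (hc _ _ h01)
  have d2 : (0:ℝ) < c (Γseq (i+2)) - c (Γseq (i+1)) := sub_pos.mpr (hc _ _ h12)
  have d0 : (0:ℝ) < c (Γseq (i+2)) - c (Γseq i) := sub_pos.mpr (hc _ _ h02)
  have e0 : W i * (c (Γseq (i+1)) - c (Γseq i)) = A (Γseq i) - A (Γseq (i+1)) := by
    rw [hatt i]; field_simp
  have e1 : W (i+1) * (c (Γseq (i+2)) - c (Γseq (i+1))) = A (Γseq (i+1)) - A (Γseq (i+2)) := by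
    rw [hatt (i+1)]; field_simp
  have hlb : W i ≤ (A (Γseq i) - A (Γseq (i+2))) / (c (Γseq (i+2)) - c (Γseq i)) :=
    (hglb i).1 ⟨Γseq (i+2), h02, rfl⟩
  have hub : (A (Γseq i) - A (Γseq (i+2))) / (c (Γseq (i+2)) - c (Γseq i)) ≤ W i := by
    rw [div_le_iff₀ d0]
    nlinarith [mul_le_mul_of_nonneg_right h (le_of_lt d2)]
  have heq := le_antisymm hub hlb
  have hle := hlargest i _ h02 heq
  exact absurd (lt_of_lt_of_le h12 hle) (lt_irrefl _)
end

section
/- Let Γ^{i-1}, Γ^i ∈ (ℕ∪{0})^K with Γ^i_u = Γ^{i-1}_u + 1 for one index u and Γ^i_j = Γ^{i-1}_j for j ≠ u. With α^Γ(j,r) = ω_j / Σ_k (Γ_k+1)ω_k, Σ_k ω_k = 1, and average reward E[R^Γ] = Σ_k Σ_{r=1}^{Γ_k} R(k,r)α^Γ(k,r) + R¹ Σ_k α^Γ(k,Γ_k+1), the ratio (E[R^{Γ^{i-1}}] − E[R^{Γ^i}]) / (c(Γ^i) − c(Γ^{i-1})), where c(Γ) = Σ_j Σ_{r=1}^{Γ_j}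 α^Γ(j,r), equals R¹ + Σ_{k=1}^K Σ_{r=1}^{Γ^{i-1}_k} R(k,r)ω_k − R(u, Γ^i_u)·Σ_{k=1}^K (Γ^{i-1}_k + 1)ω_k. -/
/-- Normalizing denominator `D(Γ) = Σ_k (Γ_k+1) ω_k` of the stationary distribution. -/
noncomputable def statDenom (K : ℕ) (ω : Fin K → ℝ) (Γ : Fin K → ℕ) : ℝ :=
  ∑ k, ((Γ k : ℝ) + 1) * ω k

/-- Average reward `E[R^Γ] = Σ_k Σ_{r=1}^{Γ_k} R(k,r) α^Γ(k,r) + R¹ Σ_k α^Γ(k,Γ_k+1)`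
with `α^Γ(k,r) = ω_k / D(Γ)`. -/
noncomputable def avgReward (K : ℕ) (ω : Fin K → ℝ) (R : Fin K → ℕ → ℝ) (R1 : ℝ)
    (Γ : Fin K → ℕ) : ℝ :=
  ∑ k, (∑ r ∈ Finset.Icc 1 (Γ k), R k r) * (ω k / statDenom K ω Γ) +
    R1 * ∑ k, ω k / statDenom K ω Γ

/-- Long-run passive-time fraction `c(Γ) = Σ_j Σ_{r=1}^{Γ_j} α^Γ(j,r)`. -/
noncomputable def passiveFrac (K : ℕ) (ω : Fin K → ℝ) (Γ : Fin K → ℕ) : ℝ :=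
  ∑ j, (Γ j : ℝ) * (ω j / statDenom K ω Γ)

/-- Explicit Whittle index (Lemma 1): for a single-coordinate increment
`Γ^i = Γ^{i-1} + e_u`, the incremental reward-to-passive-time ratio equals
`R¹ + Σ_k Σ_{r=1}^{Γ^{i-1}_k} R(k,r) ω_k − R(u,Γ^i_u) Σ_k (Γ^{i-1}_k+1) ω_k`. -/
theorem stmt_10 (K : ℕ) (ω : Fin K → ℝ) (hω : ∀ k, 0 < ω k) (hωsum : ∑ k, ω k = 1)
    (R : Fin K → ℕ → ℝ) (R1 : ℝ)
    (Γ Γ' : Fin K → ℕ) (u : Fin K)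
    (hu : Γ' u = Γ u + 1) (hother : ∀ j, j ≠ u → Γ' j = Γ j) :
    (avgReward K ω R R1 Γ - avgReward K ω R R1 Γ') /
      (passiveFrac K ω Γ' - passiveFrac K ω Γ) =
    R1 + ∑ k, (∑ r ∈ Finset.Icc 1 (Γ k), R k r) * ω k -
      R u (Γ' u) * ∑ k, ((Γ k : ℝ) + 1) * ω k := by
  have husum : ∀ (f f' : Fin K → ℝ), (∀ j, j ≠ u → f' j = f j) →
      ∑ k, f' k = (∑ k, f k) + (f' u - f u) := by
    intro f f' h
    have : ∑ k, f' k - ∑ k, f k = f' u - f u := by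
      rw [← Finset.sum_sub_distrib]
      rw [Finset.sum_eq_single u (fun j _ hj => by rw [h j hj]; ring) (by simp)]
    linarith
  set S := ∑ k, (Γ k : ℝ) * ω k with hSdef
  set A := ∑ k, (∑ r ∈ Finset.Icc 1 (Γ k), R k r) * ω k with hAdef
  set B := R u (Γ' u) with hBdef
  set D := statDenom K ω Γ with hDdef
  set D' := statDenom K ω Γ' with hD'def
  have hωu : 0 < ω u := hω u
  have hDpos : 0 < D := by
    rw [hDdef, statDenom]
    exact Finset.sum_pos (fun k _ => mul_pos (by positivity) (hω k)) ⟨u, Finset.mem_univ u⟩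
  have hD1 : D = S + 1 := by
    rw [hDdef, statDenom]
    have h1 : ∀ k : Fin K, ((Γ k : ℝ) + 1) * ω k = (Γ k : ℝ) * ω k + ω k := fun k => by ring
    simp_rw [h1]
    rw [Finset.sum_add_distrib, hωsum, hSdef]
  have hD' : D' = D + ω u := by
    rw [hD'def, hDdef, statDenom, statDenom]
    rw [husum (fun k => ((Γ k : ℝ) + 1) * ω k) (fun k => ((Γ' k : ℝ) + 1) * ω k)
      (fun j hj => by simp only [hother j hj])]
    rw [hu]; push_cast; ring
  have hD'pos : 0 < D' := by rw [hD']; positivity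
  have hS' : ∑ k, (Γ' k : ℝ) * ω k = S + ω u := by
    rw [hSdef, husum (fun k => (Γ k : ℝ) * ω k) (fun k => (Γ' k : ℝ) * ω k)
      (fun j hj => by simp only [hother j hj])]
    rw [hu]; push_cast; ring
  have hA' : ∑ k, (∑ r ∈ Finset.Icc 1 (Γ' k), R k r) * ω k = A + B * ω u := by
    rw [hAdef, husum (fun k => (∑ r ∈ Finset.Icc 1 (Γ k), R k r) * ω k)
      (fun k => (∑ r ∈ Finset.Icc 1 (Γ' k), R k r) * ω k)
      (fun j hj => by simp only [hother j hj])]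
    have h2 : ∑ r ∈ Finset.Icc 1 (Γ' u), R u r
        = (∑ r ∈ Finset.Icc 1 (Γ u), R u r) + B := by
      rw [hBdef, hu]
      exact Finset.sum_Icc_succ_top (by omega) _
    rw [h2]; ring
  have key : ∀ (g : Fin K → ℝ) (d : ℝ), ∑ k, g k * (ω k / d) = (∑ k, g k * ω k) / d := by
    intro g d
    rw [Finset.sum_div]
    exact Finset.sum_congr rfl fun k _ => (mul_div_assoc _ _ _).symm
  have hsumω : ∀ d : ℝ, ∑ k, ω k / d = 1 / d := by
    intro d; rw [← Finset.sum_div, hωsum]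
  have hE : avgReward K ω R R1 Γ = (A + R1) / D := by
    rw [avgReward, key, hsumω, ← hDdef]; rw [hAdef]; ring
  have hE' : avgReward K ω R R1 Γ' = (A + B * ω u + R1) / D' := by
    rw [avgReward, key, hsumω, ← hD'def, hA']; ring
  have hc : passiveFrac K ω Γ = S / D := by
    rw [passiveFrac, key, ← hDdef, ← hSdef]
  have hc' : passiveFrac K ω Γ' = (S + ω u) / D' := by
    rw [passiveFrac, key, ← hD'def, hS']
  have hgoalD : ∑ k, ((Γ k : ℝ) + 1) * ω k = D := rfl
  rw [hE, hE', hc, hc', hgoalD]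
  have h1 : S + 1 ≠ 0 := by rw [← hD1]; exact hDpos.ne'
  have h2 : S + 1 + ω u ≠ 0 := by rw [← hD1, ← hD']; exact hD'pos.ne'
  have hdiff : (S + ω u) / D' - S / D = ω u / (D * D') := by
    rw [hD', hD1]; field_simp [h1, h2]; ring
  rw [hdiff, div_eq_iff (by positivity)]
  rw [hD', hD1]
  field_simp [h1, h2]
  ring
end

section
/- With the explicit Whittle index W_i = R¹ + Σ_k Σ_{r=1}^{Γ^{i-1}_k} R(k,r)ω_k − R(u^i, Γ^{i-1}_{u^i}+1)·Σ_k (Γ^{i-1}_k+1)ω_k, where u^i = argmax_u R(u, Γ^{i-1}_u + 1) and Γ^i increments coordinate u^i of Γ^{i-1} by one, if R(j,·) is non-increasing in its second argument for every j and ω is a positive probability vector, then the sequence (W_i)_{i≥0} is non-decreasing; consequently the Whittle index W(π_k^τ) is non-decreasing in τ for every k. -/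
/-- Monotonicity of the explicit Whittle index (Corollary 1): with
`W_i = R¹ + Σ_k Σ_{r=1}^{Γ^{i-1}_k} R(k,r) ω_k − R(u^i, Γ^{i-1}_{u^i}+1) Σ_k (Γ^{i-1}_k+1) ω_k`,
where `u^i` maximizes `R(u, Γ^{i-1}_u + 1)` and `Γ^i` increments coordinate `u^i` of
`Γ^{i-1}` by one starting from `Γ^{-1} = 0`, if `R(j,·)` is non-increasing and bounded
by `R¹` and `ω` is a positive probability vector, then `(W_i)` is non-decreasing.
(Here `Γ i` denotes `Γ^{i-1}`.) -/
theorem stmt_11 (K : ℕ) (R : Fin K → ℕ → ℝ) (R1 : ℝ)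
    (ω : Fin K → ℝ) (hω : ∀ k, 0 < ω k) (hωsum : ∑ k, ω k = 1)
    (hR : ∀ j τ, R j (τ + 1) ≤ R j τ)
    (hRle : ∀ j τ, R j τ ≤ R1)
    (u : ℕ → Fin K) (Γ : ℕ → Fin K → ℕ)
    (hΓ0 : ∀ k, Γ 0 k = 0)
    (hΓrec : ∀ i k, Γ (i + 1) k = Γ i k + (if k = u i then 1 else 0))
    (hu : ∀ i v, R v (Γ i v + 1) ≤ R (u i) (Γ i (u i) + 1))
    (W : ℕ → ℝ)
    (hW : ∀ i, W i = R1 + ∑ k, (∑ r ∈ Finset.Icc 1 (Γ i k), R k r) * ω k -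
      R (u i) (Γ i (u i) + 1) * ∑ k, ((Γ i k : ℝ) + 1) * ω k) :
    ∀ i, W i ≤ W (i + 1) := by
  intro i
  have hT : (0:ℝ) ≤ ∑ k, ((Γ i k : ℝ) + 1) * ω k :=
    Finset.sum_nonneg fun k _ => mul_nonneg (by positivity) (hω k).le
  -- the max decreases
  have hm : R (u (i+1)) (Γ (i+1) (u (i+1)) + 1) ≤ R (u i) (Γ i (u i) + 1) := by
    have h1 : R (u (i+1)) (Γ (i+1) (u (i+1)) + 1) ≤ R (u (i+1)) (Γ i (u (i+1)) + 1) := by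
      rw [hΓrec]
      by_cases h : u (i+1) = u i
      · simpa [h] using hR (u (i+1)) (Γ i (u (i+1)) + 1)
      · simp [h]
    exact h1.trans (hu i (u (i+1)))
  -- sum of rewards changes by one term
  have hS : ∑ k, (∑ r ∈ Finset.Icc 1 (Γ (i+1) k), R k r) * ω k
      = (∑ k, (∑ r ∈ Finset.Icc 1 (Γ i k), R k r) * ω k)
        + R (u i) (Γ i (u i) + 1) * ω (u i) := by
    have key : ∀ k, (∑ r ∈ Finset.Icc 1 (Γ (i+1) k), R k r) * ω k
        = (∑ r ∈ Finset.Icc 1 (Γ i k), R k r) * ω k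
          + (if k = u i then R (u i) (Γ i (u i) + 1) * ω (u i) else 0) := by
      intro k
      rw [hΓrec]
      by_cases h : k = u i
      · subst h
        simp only [eq_self_iff_true, if_true]
        rw [Finset.sum_Icc_succ_top (by omega : 1 ≤ Γ i (u i) + 1)]
        ring
      · simp [h]
    rw [Finset.sum_congr rfl fun k _ => key k, Finset.sum_add_distrib,
      Finset.sum_ite_eq' Finset.univ (u i)]
    simp
  -- weighted count changes by ω (u i)
  have hC : ∑ k, ((Γ (i+1) k : ℝ) + 1) * ω k
      = (∑ k, ((Γ i k : ℝ) + 1) * ω k) + ω (u i) := by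
    have key : ∀ k, ((Γ (i+1) k : ℝ) + 1) * ω k
        = ((Γ i k : ℝ) + 1) * ω k + (if k = u i then ω (u i) else 0) := by
      intro k
      rw [hΓrec]
      by_cases h : k = u i
      · subst h; push_cast [if_pos rfl]; ring
      · simp [h]
    rw [Finset.sum_congr rfl fun k _ => key k, Finset.sum_add_distrib,
      Finset.sum_ite_eq' Finset.univ (u i)]
    simp
  rw [hW i, hW (i+1), hS, hC]
  nlinarith [mul_nonneg (sub_nonneg.2 hm) (add_nonneg hT (hω (u i)).le)]
end

section
/- For the value function of a fixed threshold policy Γ in the steady-state approximation, lim_{β→1^-} (1−β)·V_β(1,1) = [R¹ + Σ_{k=1}^K p_k^s Σ_{i=1}^{Γ_k}(R⁰(k,i)+W)] / [Σ_{k=1}^K (Γ_k+1) p_k^s], where V_β(1,1) is given by the closed-form expression of the previous lemma. -/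
open Filter Topology

/-- Closed-form expression for the discounted value `V_β(1,1)` of a fixed threshold
policy `Γ` in the steady-state approximation. -/
noncomputable def closedFormV (K : ℕ) (R0 : Fin K → ℕ → ℝ) (R1 W : ℝ)
    (Γ : Fin K → ℕ) (ps : Fin K → ℝ) (j0 : Fin K) (β : ℝ) : ℝ :=
  ((∑ i ∈ Finset.Icc 1 (Γ j0), β ^ (i - 1) * (R0 j0 i + W)) +
      β ^ (Γ j0) * R1 +
      β ^ (Γ j0 + 1) *
        ∑ k ∈ Finset.univ.erase j0,
          ps k * ∑ i ∈ Finset.Icc 1 (Γ k), β ^ (i - 1) * (R0 k i + W) -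
      ∑ k ∈ Finset.univ.erase j0,
        ps k * β ^ (Γ k + 1) *
          ∑ i ∈ Finset.Icc 1 (Γ j0), β ^ (i - 1) * (R0 j0 i + W)) /
    (1 - ∑ k, ps k * β ^ (Γ k + 1))

/-- Vanishing-discount limit: `lim_{β→1⁻} (1−β) V_β(1,1)` equals the long-run average
reward `(R¹ + Σ_k p_k^s Σ_{i=1}^{Γ_k}(R⁰(k,i)+W)) / Σ_k (Γ_k+1) p_k^s` of the fixed
threshold policy `Γ`. -/
theorem stmt_16 (K : ℕ) (hK : 0 < K)
    (R0 : Fin K → ℕ → ℝ) (R1 W : ℝ) (Γ : Fin K → ℕ)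
    (ps : Fin K → ℝ) (hps0 : ∀ k, 0 ≤ ps k) (hps1 : ∑ k, ps k = 1) :
    Tendsto (fun β : ℝ => (1 - β) * closedFormV K R0 R1 W Γ ps ⟨0, hK⟩ β)
      (nhdsWithin 1 (Set.Iio 1))
      (𝓝 ((R1 + ∑ k, ps k * ∑ i ∈ Finset.Icc 1 (Γ k), (R0 k i + W)) /
        (∑ k, ((Γ k : ℝ) + 1) * ps k))) := by
  set j0 : Fin K := ⟨0, hK⟩ with hj0
  set N : ℝ → ℝ := fun β =>
    (∑ i ∈ Finset.Icc 1 (Γ j0), β ^ (i - 1) * (R0 j0 i + W)) +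
      β ^ (Γ j0) * R1 +
      β ^ (Γ j0 + 1) *
        ∑ k ∈ Finset.univ.erase j0,
          ps k * ∑ i ∈ Finset.Icc 1 (Γ k), β ^ (i - 1) * (R0 k i + W) -
      ∑ k ∈ Finset.univ.erase j0,
        ps k * β ^ (Γ k + 1) *
          ∑ i ∈ Finset.Icc 1 (Γ j0), β ^ (i - 1) * (R0 j0 i + W) with hNdef
  set S : ℝ → ℝ := fun β => ∑ k, ps k * ∑ j ∈ Finset.range (Γ k + 1), β ^ j with hSdef
  -- denominator factorization
  have hden : ∀ β : ℝ, 1 - ∑ k, ps k * β ^ (Γ k + 1) = (1 - β) * S β := by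
    intro β
    have hterm : ∀ k : Fin K,
        (1 - β) * (ps k * ∑ j ∈ Finset.range (Γ k + 1), β ^ j)
          = ps k * (1 - β ^ (Γ k + 1)) := by
      intro k
      have h := geom_sum_mul β (Γ k + 1)
      have : (1 - β) * (∑ j ∈ Finset.range (Γ k + 1), β ^ j) = 1 - β ^ (Γ k + 1) := by
        nlinarith [h]
      calc (1 - β) * (ps k * ∑ j ∈ Finset.range (Γ k + 1), β ^ j)
          = ps k * ((1 - β) * ∑ j ∈ Finset.range (Γ k + 1), β ^ j) := by ring
        _ = ps k * (1 - β ^ (Γ k + 1)) := by rw [this]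
    have hrhs : (1 - β) * S β = ∑ k, ps k * (1 - β ^ (Γ k + 1)) := by
      rw [hSdef]
      simp only
      rw [Finset.mul_sum]
      exact Finset.sum_congr rfl fun k _ => hterm k
    rw [hrhs]
    simp only [mul_sub, mul_one]
    rw [Finset.sum_sub_distrib, hps1]
  -- S 1 value and positivity
  have hS1 : S 1 = ∑ k, ((Γ k : ℝ) + 1) * ps k := by
    simp only [hSdef, one_pow, Finset.sum_const, Finset.card_range, nsmul_eq_mul]
    apply Finset.sum_congr rfl
    intro k _
    push_cast
    ring
  have hS1pos : 0 < S 1 := by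
    have h1 : (1 : ℝ) = ∑ k, ps k := hps1.symm
    have : ∑ k, ps k ≤ ∑ k, ((Γ k : ℝ) + 1) * ps k := by
      apply Finset.sum_le_sum
      intro k _
      nlinarith [hps0 k, (Nat.cast_nonneg (Γ k) : (0:ℝ) ≤ (Γ k : ℝ))]
    rw [hS1]; linarith
  have hS1ne : S 1 ≠ 0 := ne_of_gt hS1pos
  -- eventual equality
  have heq : ∀ᶠ β in nhdsWithin (1:ℝ) (Set.Iio 1),
      (1 - β) * closedFormV K R0 R1 W Γ ps ⟨0, hK⟩ β = N β / S β := by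
    filter_upwards [self_mem_nhdsWithin] with β hβ
    have hβ1 : (1:ℝ) - β ≠ 0 := sub_ne_zero.2 (ne_of_lt (hβ : β < 1)).symm
    rw [closedFormV, ← hj0, hden β, mul_div_assoc', mul_div_mul_left _ _ hβ1]
  -- continuity limit
  have hcont : Tendsto (fun β => N β / S β) (nhdsWithin (1:ℝ) (Set.Iio 1)) (𝓝 (N 1 / S 1)) := by
    apply Tendsto.mono_left _ nhdsWithin_le_nhds
    exact (ContinuousAt.div (by fun_prop) (by fun_prop) hS1ne)
  -- compute N 1
  have hN1 : N 1 = R1 + ∑ k, ps k * ∑ i ∈ Finset.Icc 1 (Γ k), (R0 k i + W) := by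
    simp only [hNdef, one_pow, one_mul, mul_one]
    rw [Finset.sum_erase_eq_sub (Finset.mem_univ j0),
      Finset.sum_erase_eq_sub (Finset.mem_univ j0), ← Finset.sum_mul, hps1, one_mul]
    ring
  rw [← hN1, ← hS1]
  exact hcont.congr' (heq.mono fun x h => h.symm)
end
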